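/- The free category functor from reflexive quivers to categories does not preserve binary products. Concretely, let R be the reflexive quiver with vertex set {0,1}, one non-identity arrow e : 0 → 1, and identity edges i(0), i(1); equip R × R with the product reflexive quiver structure. Then the free category on R × R (the path category in which identity edges are identified with identity morphisms) is not equivalent to the product of the free category on R with itself: in the free category on R × R the composite of (e, i(0)) followed by (i(1), e) is a morphism (0,0) → (1,1) distinct from the generator (e, e), whereas in the product of free categories the corresponding composite equals (e, e). -/

import Mathlib

open CategoryTheory

/-- The vertex set `{0, 1}` of the reflexive quiver `R`. -/
def RV : Type := Fin 2

instance : OfNat RV 0 := ⟨(0 : Fin 2)⟩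
instance : OfNat RV 1 := ⟨(1 : Fin 2)⟩

/-- The arrows of `R`: one non-identity arrow `e : 0 → 1` together with identity edges
`i v : v → v` for each vertex `v`. -/
inductive RHom : RV → RV → Type
  | e : RHom 0 1
  | i (v : RV) : RHom v v

instance : Quiver RV := ⟨RHom⟩

/-- `R` is a reflexive quiver with identity edges `i v`. -/
instance : ReflQuiver RV := ⟨RHom.i⟩

/-- The product quiver `R × R`, with arrows pairs of arrows componentwise. -/
instance : Quiver (RV × RV) := ⟨fun a b => ((a.1 ⟶ b.1) × (a.2 ⟶ b.2))⟩

/-- The product reflexive quiver `R × R`, with identity edges pairs of identity edges. -/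
instance : ReflQuiver (RV × RV) := ⟨fun a => (𝟙rq a.1, 𝟙rq a.2)⟩

/-- The quotient functor from the path category of `R × R` to the free category on the
reflexive quiver `R × R` (paths modulo deleting identity edges). -/
noncomputable def Qprod := Cat.FreeRefl.quotientFunctor (RV × RV)

/-- The quotient functor from the path category of `R` to the free category on the
reflexive quiver `R`. -/
noncomputable def Qone := Cat.FreeRefl.quotientFunctor RV

/-! The free category on `R` is the poset `0 ≤ 1`, so it and its square are thin. In the free
category on `R × R`, counting the edges of a path that are not identity edges is a functor to
`(ℕ, +)`; it takes the value `2` on `(e, i 0) ≫ (i 1, e)` and `1` on `(e, e)`. An equivalence is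
faithful, so it would make the free category on `R × R` thin as well. -/

namespace CategoryTheory

variable {C D : Type*} [Category* C] [Category* D]

theorem Functor.Faithful.isThin (F : C ⥤ D) [F.Faithful] [Quiver.IsThin D] : Quiver.IsThin C :=
  fun _ _ => ⟨fun _ _ => F.map_injective (Subsingleton.elim _ _)⟩

instance isThin_prod [Quiver.IsThin C] [Quiver.IsThin D] : Quiver.IsThin (C × D) :=
  fun _ _ => ⟨fun _ _ => Prod.ext (Subsingleton.elim _ _) (Subsingleton.elim _ _)⟩

end CategoryTheory

def RHom.length : ∀ {x y : RV}, RHom x y → ℕ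
  | _, _, .e => 1
  | _, _, .i _ => 0

theorem RHom.le : ∀ {x y : RV}, RHom x y → @LE.le (Fin 2) _ x y
  | _, _, .e => by decide
  | _, _, .i _ => le_rfl

noncomputable def pathLength : Cat.FreeRefl (RV × RV) ⥤ SingleObj (Multiplicative ℕ) :=
  Cat.FreeRefl.lift' (fun _ => SingleObj.star _)
    (fun f => Multiplicative.ofAdd (max f.1.length f.2.length)) (fun _ => rfl)

theorem pathLength_homMk {x y : RV × RV} (f : x ⟶ y) :
    pathLength.map (Cat.FreeRefl.homMk f) = Multiplicative.ofAdd (max f.1.length f.2.length) :=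
  Cat.FreeRefl.lift'_map _ _ _ f

theorem homMk_e_i_comp_homMk_i_e_ne_homMk_e_e :
    Cat.FreeRefl.homMk (V := RV × RV)
        ((RHom.e, RHom.i 0) : (((0 : RV), (0 : RV)) : RV × RV) ⟶ ((1 : RV), (0 : RV))) ≫
      Cat.FreeRefl.homMk (V := RV × RV)
        ((RHom.i 1, RHom.e) : (((1 : RV), (0 : RV)) : RV × RV) ⟶ ((1 : RV), (1 : RV))) ≠
    Cat.FreeRefl.homMk (V := RV × RV)
        ((RHom.e, RHom.e) : (((0 : RV), (0 : RV)) : RV × RV) ⟶ ((1 : RV), (1 : RV))) := by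
  intro h
  have h2 := congrArg pathLength.map h
  simp only [Functor.map_comp, pathLength_homMk, RHom.length, SingleObj.comp_as_mul] at h2
  exact absurd (Multiplicative.ofAdd.injective h2) (by decide)

noncomputable def toFin2 : Cat.FreeRefl RV ⥤ Fin 2 :=
  Cat.FreeRefl.lift' (fun v : RV => (v : Fin 2)) (fun f => homOfLE (RHom.le f)) (fun _ => rfl)

noncomputable def ofFin2 : Fin 2 ⥤ Cat.FreeRefl RV :=
  ComposableArrows.mk₁ (Cat.FreeRefl.homMk RHom.e)

theorem toFin2_comp_ofFin2 : toFin2 ⋙ ofFin2 = 𝟭 _ := by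
  refine Cat.FreeRefl.functor_ext (fun | ⟨0, _⟩ => rfl | ⟨1, _⟩ => rfl) (fun {v w} f => ?_)
  change RHom v w at f
  cases f with
  | e => rfl
  | i v =>
    change (toFin2 ⋙ ofFin2).map (Cat.FreeRefl.homMk (𝟙rq v)) =
      eqToHom _ ≫ (𝟭 _).map (Cat.FreeRefl.homMk (𝟙rq v)) ≫ eqToHom _
    simp

instance : Quiver.IsThin (Cat.FreeRefl RV) :=
  haveI := Functor.Faithful.of_comp_eq toFin2_comp_ofFin2
  Functor.Faithful.isThin toFin2

/-- The free category functor from reflexive quivers to categories does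
not preserve binary products.  Concretely, the free category on `R × R` is not equivalent
to the product of the free category on `R` with itself: in the free category on `R × R`
the composite of `(e, i 0)` followed by `(i 1, e)` is distinct from the generator
`(e, e)`, whereas in the product of free categories the corresponding composite equals
`(e, e)`. -/
theorem stmt9 :
    IsEmpty (Cat.FreeRefl (RV × RV) ≌ Cat.FreeRefl RV × Cat.FreeRefl RV) ∧
    Qprod.map (Quiver.Hom.toPath
        ((RHom.e, RHom.i 0) : (((0 : RV), (0 : RV)) : RV × RV) ⟶ ((1 : RV), (0 : RV)))) ≫
      Qprod.map (Quiver.Hom.toPath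
        ((RHom.i 1, RHom.e) : (((1 : RV), (0 : RV)) : RV × RV) ⟶ ((1 : RV), (1 : RV)))) ≠
    Qprod.map (Quiver.Hom.toPath
        ((RHom.e, RHom.e) : (((0 : RV), (0 : RV)) : RV × RV) ⟶ ((1 : RV), (1 : RV)))) ∧
    @CategoryStruct.comp (Cat.FreeRefl RV × Cat.FreeRefl RV) _
      (Qone.obj (0 : RV), Qone.obj (0 : RV))
      (Qone.obj (1 : RV), Qone.obj (0 : RV))
      (Qone.obj (1 : RV), Qone.obj (1 : RV))
      (Qone.map (Quiver.Hom.toPath RHom.e), Qone.map (Quiver.Hom.toPath (RHom.i 0)))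
      (Qone.map (Quiver.Hom.toPath (RHom.i 1)), Qone.map (Quiver.Hom.toPath RHom.e)) =
    (Qone.map (Quiver.Hom.toPath RHom.e), Qone.map (Quiver.Hom.toPath RHom.e)) := by
  have hne := homMk_e_i_comp_homMk_i_e_ne_homMk_e_e
  exact ⟨⟨fun E => hne (E.functor.map_injective (Subsingleton.elim _ _))⟩, hne,
    Subsingleton.elim _ _⟩
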